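/- Let G⃗ be a finite directed rooted tree with all edges directed away from the root. Then adim(G⃗) = bdim(G⃗). -/

import Mathlib

open SimpleGraph Finset

/-- `A` is an adjacency resolving set of `G`. -/
def IsAdjResolving {V : Type*} (G : SimpleGraph V) (A : Set V) : Prop :=
  ∀ x y : V, x ≠ y → ∃ z ∈ A, min (G.edist z x) 2 ≠ min (G.edist z y) 2

/-- The adjacency dimension of `G`. -/
noncomputable def adim {V : Type*} [Fintype V] [DecidableEq V] (G : SimpleGraph V) : ℕ :=
  sInf {n | ∃ A : Finset V, IsAdjResolving G ↑A ∧ A.card = n}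

/-- `C` is a locating-dominating set of `G`. -/
def IsLocDom {V : Type*} (G : SimpleGraph V) (C : Set V) : Prop :=
  (∀ v ∉ C, ((G.neighborSet v ∪ {v}) ∩ C).Nonempty) ∧
  ∀ u ∉ C, ∀ v ∉ C, u ≠ v →
    (G.neighborSet u ∪ {u}) ∩ C ≠ (G.neighborSet v ∪ {v}) ∩ C

/-- The locating-dominating number of `G`. -/
noncomputable def LD {V : Type*} [Fintype V] [DecidableEq V] (G : SimpleGraph V) : ℕ :=
  sInf {n | ∃ C : Finset V, IsLocDom G ↑C ∧ C.card = n}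

/-- `f` is a resolving broadcast of `G`. -/
def IsResolvingBroadcast {V : Type*} (G : SimpleGraph V) (f : V → ℕ) : Prop :=
  ∀ x y : V, x ≠ y → ∃ z, 0 < f z ∧
    min (G.edist z x) ((f z : ℕ∞) + 1) ≠ min (G.edist z y) ((f z : ℕ∞) + 1)

/-- The broadcast dimension of `G`. -/
noncomputable def bdim {V : Type*} [Fintype V] (G : SimpleGraph V) : ℕ :=
  sInf {n | ∃ f : V → ℕ, IsResolvingBroadcast G f ∧ ∑ v, f v = n}

/-- There is a directed path of length `m` from `u` to `v` in the digraph `D`. -/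
def DPath {V : Type*} (D : V → V → Prop) (u v : V) (m : ℕ) : Prop :=
  ∃ p : Fin (m + 1) → V, p 0 = u ∧ p (Fin.last m) = v ∧
    ∀ i : Fin m, D (p i.castSucc) (p i.succ)

/-- Directed distance in the digraph `D` (∞ if there is no directed path). -/
noncomputable def ddist {V : Type*} (D : V → V → Prop) (u v : V) : ℕ∞ :=
  sInf {n : ℕ∞ | ∃ m : ℕ, DPath D u v m ∧ n = m}

/-- `A` is an adjacency resolving set of the digraph `D`. -/
def IsDirAdjResolving {V : Type*} (D : V → V → Prop) (A : Set V) : Prop :=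
  ∀ x y : V, x ≠ y → ∃ z ∈ A, min (ddist D z x) 2 ≠ min (ddist D z y) 2

/-- The adjacency dimension of the digraph `D`. -/
noncomputable def dirAdim {V : Type*} [Fintype V] [DecidableEq V] (D : V → V → Prop) : ℕ :=
  sInf {n | ∃ A : Finset V, IsDirAdjResolving D ↑A ∧ A.card = n}

/-- `f` is a resolving broadcast of the digraph `D`. -/
def IsDirResolvingBroadcast {V : Type*} (D : V → V → Prop) (f : V → ℕ) : Prop :=
  ∀ x y : V, x ≠ y → ∃ z, 0 < f z ∧
    min (ddist D z x) ((f z : ℕ∞) + 1) ≠ min (ddist D z y) ((f z : ℕ∞) + 1)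

/-- The broadcast dimension of the digraph `D`. -/
noncomputable def dirBdim {V : Type*} [Fintype V] (D : V → V → Prop) : ℕ :=
  sInf {n | ∃ f : V → ℕ, IsDirResolvingBroadcast D f ∧ ∑ v, f v = n}

/-- `D` is an orientation of the simple graph `G`. -/
def IsOrientation {V : Type*} (G : SimpleGraph V) (D : V → V → Prop) : Prop :=
  (∀ u v, G.Adj u v ↔ (D u v ∨ D v u)) ∧ ∀ u v, ¬(D u v ∧ D v u)

/-- The adjacency dimension: minimum total weight of a resolving broadcast
taking values in {0,1}. -/
noncomputable def dirAdimB {V : Type*} [Fintype V] (D : V → V → Prop) : ℕ :=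
  sInf {n | ∃ f : V → ℕ, IsDirResolvingBroadcast D f ∧ (∀ v, f v ≤ 1) ∧ ∑ v, f v = n}

/-!
In an out-forest the directed distance from `z` is `dep · - dep z` on the descendants of `z` and
`∞` elsewhere. Let `f` be a resolving broadcast with `f z = k + 1 ≥ 2` and lower `f z` by one.
A pair that becomes unresolved has the form `x, y` with `d(z, x) = k + 1 < d(z, y)`, and all such
pairs share the same `x`: two candidates on the same level below `z` are told apart by some vertex
`v ≠ z`, and `v` then already tells one of them from its partner. Giving the unit to the parent `w`
of that `x` resolves these pairs again, since any other vertex at distance `1` from `w` lies at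
distance `k + 1` from `z`. The move keeps the total weight and pushes weight strictly deeper, so
iterating it ends at a `{0,1}`-valued resolving broadcast.
-/

theorem ENat.min_add_one_ne_min_add_one_iff {a b : ℕ∞} {k : ℕ} :
    min a (k + 1) ≠ min b (k + 1) ↔ a ≠ b ∧ min a b ≤ k := by
  rw [← Nat.cast_succ]
  induction a using ENat.recTopCoe <;> induction b using ENat.recTopCoe <;>
    simp only [← Nat.mono_cast.map_min, min_top_left, min_top_right, ne_eq, Nat.cast_inj,
      Nat.cast_le, top_le_iff, ENat.natCast_ne_top, ENat.top_ne_natCast, not_true,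
      not_false_eq_true, false_and, true_and] <;> omega

section DPath

variable {V : Type*} {D : V → V → Prop} {u v : V} {m : ℕ}

theorem DPath.zero_iff : DPath D u v 0 ↔ u = v :=
  ⟨fun ⟨_, h0, hl, _⟩ => h0.symm.trans hl, fun h => ⟨fun _ => u, rfl, h, fun i => i.elim0⟩⟩

theorem DPath.succ_iff : DPath D u v (m + 1) ↔ ∃ w, DPath D u w m ∧ D w v := by
  constructor
  · rintro ⟨p, h0, hl, hp⟩
    refine ⟨p (Fin.last m).castSucc, ⟨Fin.init p, h0, rfl, fun i => ?_⟩, hl ▸ hp (Fin.last m)⟩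
    simpa [Fin.init, ← Fin.succ_castSucc] using hp i.castSucc
  · rintro ⟨w, ⟨p, h0, hl, hp⟩, hwv⟩
    refine ⟨Fin.snoc p v, h0, Fin.snoc_last _ _, fun i => ?_⟩
    induction i using Fin.lastCases with
    | last => simpa [hl] using hwv
    | cast j =>
      rw [Fin.succ_castSucc, Fin.snoc_castSucc, Fin.snoc_castSucc]
      exact hp j

theorem reflTransGen_iff_exists_dPath : Relation.ReflTransGen D u v ↔ ∃ m, DPath D u v m := by
  constructor
  · intro h
    induction h with
    | refl => exact ⟨0, DPath.zero_iff.2 rfl⟩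
    | tail _ hwv ih =>
      obtain ⟨m, hm⟩ := ih
      exact ⟨m + 1, DPath.succ_iff.2 ⟨_, hm, hwv⟩⟩
  · rintro ⟨m, hm⟩
    induction m generalizing v with
    | zero => exact DPath.zero_iff.1 hm ▸ .refl
    | succ m ih =>
      obtain ⟨w, hw, hwv⟩ := DPath.succ_iff.1 hm
      exact (ih hw).tail hwv

theorem ddist_le_of_dPath (h : DPath D u v m) : ddist D u v ≤ m :=
  sInf_le ⟨m, h, rfl⟩

theorem ddist_self : ddist D u u = 0 :=
  nonpos_iff_eq_zero.1 (ddist_le_of_dPath (DPath.zero_iff.2 rfl))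

theorem one_le_ddist (h : u ≠ v) : 1 ≤ ddist D u v := by
  refine le_sInf ?_
  rintro _ ⟨_ | m, hm, rfl⟩
  · exact absurd (DPath.zero_iff.1 hm) h
  · exact_mod_cast m.succ_pos

theorem ddist_eq_top (h : ¬ Relation.ReflTransGen D u v) : ddist D u v = ⊤ := by
  refine sInf_eq_top.2 ?_
  rintro _ ⟨m, hm, rfl⟩
  exact absurd (reflTransGen_iff_exists_dPath.2 ⟨m, hm⟩) h

theorem reflTransGen_of_ddist_ne_top (h : ddist D u v ≠ ⊤) : Relation.ReflTransGen D u v :=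
  not_not.1 (mt ddist_eq_top h)

theorem reflTransGen_total_of_leftUnique {x : V} (hD : Relator.LeftUnique D)
    (hu : Relation.ReflTransGen D u x) (hv : Relation.ReflTransGen D v x) :
    Relation.ReflTransGen D u v ∨ Relation.ReflTransGen D v u := by
  rw [← Relation.reflTransGen_swap] at hu hv ⊢
  rw [← Relation.reflTransGen_swap (r := D)]
  have hU : Relator.RightUnique (Function.swap D) := fun _ _ _ h h' => hD h h'
  exact (Relation.ReflTransGen.total_of_right_unique hU hu hv).symm

end DPath

section Resolving

variable {V : Type*} {D : V → V → Prop} {f g : V → ℕ} {x y z : V} {k l : ℕ}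

def Separates (D : V → V → Prop) (z : V) (k : ℕ) (x y : V) : Prop :=
  ddist D z x ≠ ddist D z y ∧ min (ddist D z x) (ddist D z y) ≤ k

def Resolves (D : V → V → Prop) (f : V → ℕ) (x y : V) : Prop :=
  ∃ z, 0 < f z ∧ Separates D z (f z) x y

theorem isDirResolvingBroadcast_iff :
    IsDirResolvingBroadcast D f ↔ ∀ x y, x ≠ y → Resolves D f x y := by
  simp only [IsDirResolvingBroadcast, Resolves, Separates, ENat.min_add_one_ne_min_add_one_iff]

theorem Separates.symm (h : Separates D z k x y) : Separates D z k y x :=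
  ⟨h.1.symm, min_comm (ddist D z x) _ ▸ h.2⟩

theorem Separates.mono (h : Separates D z k x y) (hkl : k ≤ l) : Separates D z l x y :=
  ⟨h.1, h.2.trans (Nat.cast_le.2 hkl)⟩

theorem separates_self (h : x ≠ y) : Separates D x k x y := by
  rw [Separates, ddist_self]
  exact ⟨(zero_lt_one.trans_le (one_le_ddist h)).ne, (min_le_left _ _).trans zero_le⟩

theorem Resolves.symm (h : Resolves D f x y) : Resolves D f y x :=
  let ⟨z, hz, hsep⟩ := h
  ⟨z, hz, hsep.symm⟩

theorem Resolves.mono (h : Resolves D f x y) (hfg : f ≤ g) : Resolves D g x y :=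
  let ⟨z, hz, hsep⟩ := h
  ⟨z, hz.trans_le (hfg z), hsep.mono (hfg z)⟩

theorem isDirResolvingBroadcast_one : IsDirResolvingBroadcast D 1 :=
  isDirResolvingBroadcast_iff.2 fun x _ h => ⟨x, one_pos, separates_self h⟩

theorem ddist_eq_and_lt_of_not_resolves [DecidableEq V] (hz : 0 < f z)
    (h : Resolves D (f + Pi.single z 1) x y) (hn : ¬ Resolves D f x y) :
    ddist D z x = ↑(f z + 1) ∧ ↑(f z + 1) < ddist D z y ∨
      ddist D z y = ↑(f z + 1) ∧ ↑(f z + 1) < ddist D z x := by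
  obtain ⟨v, hv, hsep⟩ := h
  obtain rfl : v = z := by
    by_contra hvz
    simp only [Pi.add_apply, Pi.single_eq_of_ne hvz, add_zero] at hv hsep
    exact hn ⟨v, hv, hsep⟩
  simp only [Pi.add_apply, Pi.single_eq_same] at hsep
  have hmin : min (ddist D v x) (ddist D v y) = ↑(f v + 1) := by
    refine le_antisymm hsep.2 ?_
    rw [Nat.cast_succ]
    exact Order.add_one_le_of_lt (not_le.1 fun hle => hn ⟨v, hz, hsep.1, hle⟩)
  rcases lt_or_gt_of_ne hsep.1 with hlt | hlt
  · rw [min_eq_left hlt.le] at hmin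
    exact .inl ⟨hmin, hmin ▸ hlt⟩
  · rw [min_eq_right hlt.le] at hmin
    exact .inr ⟨hmin, hmin ▸ hlt⟩

end Resolving

def IsGrading {V : Type*} (D : V → V → Prop) (dep : V → ℕ) : Prop :=
  ∀ ⦃u v⦄, D u v → dep v = dep u + 1

namespace IsGrading

variable {V : Type*} {D : V → V → Prop} {dep : V → ℕ} {u v w x x' y z : V} {m k : ℕ}

open Relation

theorem dep_eq_of_dPath (hdep : IsGrading D dep) (h : DPath D u v m) : dep v = dep u + m := by
  induction m generalizing v with
  | zero => rw [DPath.zero_iff.1 h, add_zero]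
  | succ m ih =>
    obtain ⟨w, hw, hwv⟩ := DPath.succ_iff.1 h
    rw [hdep hwv, ih hw, add_assoc]

theorem ddist_eq_of_dPath (hdep : IsGrading D dep) (h : DPath D u v m) : ddist D u v = m := by
  refine le_antisymm (ddist_le_of_dPath h) (le_sInf ?_)
  rintro _ ⟨m', hm', rfl⟩
  have := hdep.dep_eq_of_dPath h
  have := hdep.dep_eq_of_dPath hm'
  exact Nat.cast_le.2 (by omega)

theorem le_of_reflTransGen (hdep : IsGrading D dep) (h : ReflTransGen D u v) : dep u ≤ dep v := by
  obtain ⟨m, hm⟩ := reflTransGen_iff_exists_dPath.1 h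
  exact hdep.dep_eq_of_dPath hm ▸ Nat.le_add_right _ _

theorem ddist_eq (hdep : IsGrading D dep) (h : ReflTransGen D u v) :
    ddist D u v = ↑(dep v - dep u) := by
  obtain ⟨m, hm⟩ := reflTransGen_iff_exists_dPath.1 h
  rw [hdep.ddist_eq_of_dPath hm, hdep.dep_eq_of_dPath hm, Nat.add_sub_cancel_left]

theorem separates_of_ddist_lt (hdep : IsGrading D dep) (hD : Relator.LeftUnique D)
    (hxx' : ddist D z x = ddist D z x') (hzx : ddist D z x ≠ ⊤)
    (hxy : ddist D z x < ddist D z y) (hk : ddist D v x ≤ k)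
    (hlt : ddist D v x < ddist D v x') : Separates D v k x y := by
  have hzx' := reflTransGen_of_ddist_ne_top (hxx' ▸ hzx)
  replace hzx := reflTransGen_of_ddist_ne_top hzx
  have hdx : dep x = dep x' := by
    rw [hdep.ddist_eq hzx, hdep.ddist_eq hzx', Nat.cast_inj] at hxx'
    have := hdep.le_of_reflTransGen hzx
    have := hdep.le_of_reflTransGen hzx'
    omega
  have hvx := reflTransGen_of_ddist_ne_top hlt.ne_top
  have hvx' : ¬ ReflTransGen D v x' := fun h =>
    hlt.ne (by rw [hdep.ddist_eq hvx, hdep.ddist_eq h, hdx])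
  have hzv : ReflTransGen D z v :=
    (reflTransGen_total_of_leftUnique hD hzx hvx).resolve_right fun h => hvx' (h.trans hzx')
  refine ⟨fun hxy' => ?_, (min_le_left _ _).trans hk⟩
  have hvy := reflTransGen_of_ddist_ne_top (hxy' ▸ hlt.ne_top)
  have hzy := hzv.trans hvy
  rw [hdep.ddist_eq hvx, hdep.ddist_eq hvy, Nat.cast_inj] at hxy'
  rw [hdep.ddist_eq hzx, hdep.ddist_eq hzy, Nat.cast_lt] at hxy
  have := hdep.le_of_reflTransGen hzv
  have := hdep.le_of_reflTransGen hvx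
  have := hdep.le_of_reflTransGen hvy
  omega

theorem separates_of_adj (hdep : IsGrading D dep) (hzw : ReflTransGen D z w) (hwx : D w x)
    (hxy : ddist D z x < ddist D z y) : Separates D w 1 x y := by
  have hwx1 : ddist D w x = 1 := by
    rw [hdep.ddist_eq (.single hwx), hdep hwx, Nat.add_sub_cancel_left, Nat.cast_one]
  refine ⟨fun h => ?_, by rw [hwx1, Nat.cast_one]; exact min_le_left _ _⟩
  have hwy := reflTransGen_of_ddist_ne_top (h ▸ hwx1 ▸ ENat.one_ne_top)
  have hzx := hzw.tail hwx
  have hzy := hzw.trans hwy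
  rw [hwx1, hdep.ddist_eq hwy, ← Nat.cast_one, Nat.cast_inj] at h
  rw [hdep.ddist_eq hzx, hdep.ddist_eq hzy, Nat.cast_lt] at hxy
  have := hdep hwx
  have := hdep.le_of_reflTransGen hzw
  omega

theorem eq_of_not_resolves [DecidableEq V] (hdep : IsGrading D dep) (hD : Relator.LeftUnique D)
    {f : V → ℕ} {x₀ y₀ : V} (hf : IsDirResolvingBroadcast D (f + Pi.single z 1))
    (hxx₀ : ddist D z x = ddist D z x₀) (hzx : ddist D z x ≠ ⊤)
    (hxy : ddist D z x < ddist D z y) (hxy₀ : ddist D z x₀ < ddist D z y₀)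
    (hn : ¬ Resolves D f x y) (hn₀ : ¬ Resolves D f x₀ y₀) : x = x₀ := by
  by_contra hne
  obtain ⟨v, hv, hvne, hvmin⟩ := isDirResolvingBroadcast_iff.1 hf x x₀ hne
  have hvz : v ≠ z := by
    rintro rfl
    exact hvne hxx₀
  simp only [Pi.add_apply, Pi.single_eq_of_ne hvz, add_zero] at hv hvmin
  rcases lt_or_gt_of_ne hvne with hlt | hlt
  · rw [min_eq_left hlt.le] at hvmin
    exact hn ⟨v, hv, hdep.separates_of_ddist_lt hD hxx₀ hzx hxy hvmin hlt⟩
  · rw [min_eq_right hlt.le] at hvmin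
    exact hn₀ ⟨v, hv, hdep.separates_of_ddist_lt hD hxx₀.symm (hxx₀ ▸ hzx) hxy₀ hvmin hlt⟩

theorem isDirResolvingBroadcast_add_single [DecidableEq V] (hdep : IsGrading D dep)
    (hD : Relator.LeftUnique D) {f : V → ℕ} {x₀ y₀ : V}
    (hf : IsDirResolvingBroadcast D (f + Pi.single z 1)) (hz : 0 < f z)
    (hzw : ReflTransGen D z w) (hwx₀ : D w x₀) (hx₀ : ddist D z x₀ = ↑(f z + 1))
    (hy₀ : ↑(f z + 1) < ddist D z y₀) (hn₀ : ¬ Resolves D f x₀ y₀) :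
    IsDirResolvingBroadcast D (f + Pi.single w 1) := by
  have hw : ∀ x y, ¬ Resolves D f x y → ddist D z x = ↑(f z + 1) → ↑(f z + 1) < ddist D z y →
      Resolves D (f + Pi.single w 1) x y := by
    intro x y hn hx hy
    obtain rfl : x = x₀ := hdep.eq_of_not_resolves hD hf (hx.trans hx₀.symm)
      (hx ▸ ENat.natCast_ne_top _) (hx ▸ hy) (hx₀ ▸ hy₀) hn hn₀
    refine ⟨w, by simp, (hdep.separates_of_adj hzw hwx₀ (hx ▸ hy)).mono ?_⟩
    simp
  refine isDirResolvingBroadcast_iff.2 fun x y hxy => ?_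
  by_cases hr : Resolves D f x y
  · exact hr.mono le_self_add
  rcases ddist_eq_and_lt_of_not_resolves hz (isDirResolvingBroadcast_iff.1 hf x y hxy) hr with
    ⟨hx, hy⟩ | ⟨hy, hx⟩
  · exact hw x y hr hx hy
  · exact (hw y x (fun h => hr h.symm) hy hx).symm

theorem exists_potential_lt [Fintype V] (hdep : IsGrading D dep) (hD : Relator.LeftUnique D)
    {C : ℕ} (hC : ∀ v, dep v < C) {f : V → ℕ} (hf : IsDirResolvingBroadcast D f)
    (hz : 2 ≤ f z) :
    ∃ g, IsDirResolvingBroadcast D g ∧ ∑ v, g v ≤ ∑ v, f v ∧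
      ∑ v, g v * (C - dep v) < ∑ v, f v * (C - dep v) := by
  classical
  obtain ⟨f, hpos, rfl⟩ : ∃ f' : V → ℕ, 0 < f' z ∧ f = f' + Pi.single z 1 := by
    refine ⟨Function.update f z (f z - 1), by rw [Function.update_self]; omega, funext fun v => ?_⟩
    rcases eq_or_ne v z with rfl | hvz
    · rw [Pi.add_apply, Function.update_self, Pi.single_eq_same]
      omega
    · simp [hvz]
  have hsum (w : V) (c : V → ℕ) :
      ∑ v, (f + Pi.single w 1 : V → ℕ) v * c v = ∑ v, f v * c v + c w := by
    simp [add_mul, Finset.sum_add_distrib, Pi.single_apply]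
  have hsum₁ (w : V) : ∑ v, (f + Pi.single w 1 : V → ℕ) v = ∑ v, f v + 1 := by
    simpa using hsum w 1
  simp only [hsum, hsum₁]
  by_cases hres : IsDirResolvingBroadcast D f
  · exact ⟨f, hres, by omega, by have := hC z; omega⟩
  obtain ⟨x₀, y₀, hn₀, hx₀, hy₀⟩ : ∃ x y, ¬ Resolves D f x y ∧
      ddist D z x = ↑(f z + 1) ∧ ↑(f z + 1) < ddist D z y := by
    obtain ⟨x, y, hxy, hn⟩ : ∃ x y, x ≠ y ∧ ¬ Resolves D f x y := by
      simpa [isDirResolvingBroadcast_iff] using hres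
    rcases ddist_eq_and_lt_of_not_resolves hpos (isDirResolvingBroadcast_iff.1 hf x y hxy) hn with
      h | h
    · exact ⟨x, y, hn, h⟩
    · exact ⟨y, x, fun h' => hn h'.symm, h⟩
  obtain ⟨m, hm⟩ := reflTransGen_iff_exists_dPath.1
    (reflTransGen_of_ddist_ne_top (hx₀ ▸ ENat.natCast_ne_top _))
  obtain rfl : m = f z + 1 := Nat.cast_inj.1 ((hdep.ddist_eq_of_dPath hm).symm.trans hx₀)
  obtain ⟨w, hzw, hwx₀⟩ := DPath.succ_iff.1 hm
  have hdw := hdep.dep_eq_of_dPath hzw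
  refine ⟨f + Pi.single w 1, hdep.isDirResolvingBroadcast_add_single hD hf hpos
    (reflTransGen_iff_exists_dPath.2 ⟨_, hzw⟩) hwx₀ hx₀ hy₀ hn₀, ?_, ?_⟩
  · rw [hsum₁]
  · have := hC w
    rw [hsum]
    omega

theorem exists_resolving_le_one [Fintype V] (hdep : IsGrading D dep) (hD : Relator.LeftUnique D)
    {f : V → ℕ} (hf : IsDirResolvingBroadcast D f) :
    ∃ g, IsDirResolvingBroadcast D g ∧ (∀ v, g v ≤ 1) ∧ ∑ v, g v ≤ ∑ v, f v := by
  obtain ⟨C, hC⟩ : ∃ C, ∀ v, dep v < C :=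
    ⟨Finset.univ.sup dep + 1, fun v => Nat.lt_succ_of_le (Finset.le_sup (Finset.mem_univ v))⟩
  induction hΦ : ∑ v, f v * (C - dep v) using Nat.strong_induction_on generalizing f with
  | _ n ih =>
  by_cases h1 : ∀ v, f v ≤ 1
  · exact ⟨f, hf, h1, le_rfl⟩
  obtain ⟨z, hz⟩ := not_forall.1 h1
  obtain ⟨g, hg, hgf, hgΦ⟩ := hdep.exists_potential_lt hD hC hf (not_le.1 hz)
  obtain ⟨g', hg', hg'1, hg'g⟩ := ih _ (hΦ ▸ hgΦ) hg rfl
  exact ⟨g', hg', hg'1, hg'g.trans hgf⟩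

theorem dirAdimB_eq_dirBdim [Fintype V] (hdep : IsGrading D dep) (hD : Relator.LeftUnique D) :
    dirAdimB D = dirBdim D := by
  have hB : {n | ∃ f : V → ℕ, IsDirResolvingBroadcast D f ∧ ∑ v, f v = n}.Nonempty :=
    ⟨_, 1, isDirResolvingBroadcast_one, rfl⟩
  have hA : {n | ∃ f : V → ℕ, IsDirResolvingBroadcast D f ∧ (∀ v, f v ≤ 1) ∧
      ∑ v, f v = n}.Nonempty :=
    ⟨_, 1, isDirResolvingBroadcast_one, fun _ => le_rfl, rfl⟩
  refine le_antisymm ?_ ?_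
  · obtain ⟨f, hf, hfs⟩ := Nat.sInf_mem hB
    obtain ⟨g, hg, hg1, hgf⟩ := hdep.exists_resolving_le_one hD hf
    calc dirAdimB D ≤ ∑ v, g v := Nat.sInf_le ⟨g, hg, hg1, rfl⟩
      _ ≤ ∑ v, f v := hgf
      _ = dirBdim D := hfs
  · obtain ⟨f, hf, -, hfs⟩ := Nat.sInf_mem hA
    calc dirBdim D ≤ ∑ v, f v := Nat.sInf_le ⟨f, hf, rfl⟩
      _ = dirAdimB D := hfs

end IsGrading

theorem DPath.length_eq_of_root {V : Type*} {D : V → V → Prop} {r v : V} {m m' : ℕ}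
    (hroot : ∀ u, ¬ D u r) (hD : Relator.LeftUnique D) (h : DPath D r v m)
    (h' : DPath D r v m') : m = m' := by
  induction m generalizing v m' with
  | zero =>
    obtain rfl := DPath.zero_iff.1 h
    cases m' with
    | zero => rfl
    | succ m' =>
      obtain ⟨w, -, hw⟩ := DPath.succ_iff.1 h'
      exact absurd hw (hroot w)
  | succ m ih =>
    obtain ⟨w, hw, hwv⟩ := DPath.succ_iff.1 h
    cases m' with
    | zero =>
      obtain rfl := DPath.zero_iff.1 h'
      exact absurd hwv (hroot w)
    | succ m' =>
      obtain ⟨w', hw', hw'v⟩ := DPath.succ_iff.1 h'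
      obtain rfl := hD hwv hw'v
      rw [ih hw hw']

theorem exists_isGrading_of_root {V : Type*} {D : V → V → Prop} {r : V}
    (hreach : ∀ v, Relation.ReflTransGen D r v) (hroot : ∀ u, ¬ D u r)
    (hD : Relator.LeftUnique D) : ∃ dep, IsGrading D dep := by
  choose dep hdep using fun v => reflTransGen_iff_exists_dPath.1 (hreach v)
  exact ⟨dep, fun u v huv =>
    DPath.length_eq_of_root hroot hD (hdep v) (DPath.succ_iff.2 ⟨u, hdep u, huv⟩)⟩

/-- For a finite directed rooted tree with all edges directed away from the
root, `adim(G⃗) = bdim(G⃗)`. -/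
theorem stmt_17 {V : Type*} [Fintype V] (D : V → V → Prop) (r : V)
    (hreach : ∀ v, Relation.ReflTransGen D r v)
    (hparent : ∀ v, v ≠ r → ∃! u, D u v)
    (hroot : ∀ u, ¬ D u r) :
    dirAdimB D = dirBdim D := by
  have hD : Relator.LeftUnique D := fun u u' v hu hu' =>
    (hparent v fun hv => hroot u (hv ▸ hu)).unique hu hu'
  obtain ⟨dep, hdep⟩ := exists_isGrading_of_root hreach hroot hD
  exact hdep.dirAdimB_eq_dirBdim hD
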